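/- arXiv:2205.11883 — 4 statements merged into one kernel-verified Lean document; each statement's English description precedes it below -/
import Mathlib

section
/- Let G be a Grothendieck abelian category and S a simple object of G. Then the composite of the canonical quotient E(S) → E(S)/S with the injective envelope E(S)/S → E(E(S)/S) is a left almost split morphism in the full subcategory Inj(G) of injective objects of G. -/
open CategoryTheory Limits

universe u v

namespace Paper

/-- `f` is a left almost split morphism in the full subcategory of objects satisfying `P`:
it is not a split monomorphism, and every morphism out of its domain into an object of the
subcategory which is not a split monomorphism factors through it. -/
def LeftAlmostSplitIn {C : Type u} [Category.{v} C] (P : C → Prop) {X Y : C} (f : X ⟶ Y) :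
    Prop :=
  ¬ IsSplitMono f ∧
    ∀ ⦃Z : C⦄, P Z → ∀ g : X ⟶ Z, ¬ IsSplitMono g → ∃ h : Y ⟶ Z, f ≫ h = g

/-- A strong left almost split morphism: the factorization is moreover unique. -/
def StrongLeftAlmostSplitIn {C : Type u} [Category.{v} C] (P : C → Prop) {X Y : C}
    (f : X ⟶ Y) : Prop :=
  ¬ IsSplitMono f ∧
    ∀ ⦃Z : C⦄, P Z → ∀ g : X ⟶ Z, ¬ IsSplitMono g → ∃! h : Y ⟶ Z, f ≫ h = g

/-- An injective envelope: an essential monomorphism into an injective object. -/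
def IsInjectiveEnvelope {C : Type u} [Category.{v} C] {S E : C} (i : S ⟶ E) : Prop :=
  Injective E ∧ Mono i ∧ ∀ ⦃Z : C⦄ (g : E ⟶ Z), Mono (i ≫ g) → Mono g

variable {G : Type u} [Category.{v} G] [Abelian G] [HasFilteredColimits G] [AB5 G]
  [HasSeparator G]

theorem las_of_simple (S : G) (hS : Simple S) {E : G} (i : S ⟶ E)
    (hi : IsInjectiveEnvelope i) {E' : G} (j : cokernel i ⟶ E')
    (hj : IsInjectiveEnvelope j) :
    LeftAlmostSplitIn (fun X : G => Injective X) (cokernel.π i ≫ j) := by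
  haveI := hS
  obtain ⟨hE, hmi, hess⟩ := hi
  obtain ⟨hE', hmj, -⟩ := hj
  haveI := hE; haveI := hE'; haveI := hmi; haveI := hmj
  constructor
  · intro hsplit
    have h0 : i ≫ (cokernel.π i ≫ j) = 0 := by
      rw [← Category.assoc, cokernel.condition, zero_comp]
    have hi0 : i = 0 := by
      rw [← cancel_mono (cokernel.π i ≫ j), h0, zero_comp]
    have : 𝟙 S = 0 := by
      rw [← cancel_mono i, hi0, comp_zero, comp_zero]
    exact id_nonzero S this
  · intro Z hZ g hg
    by_cases h0 : i ≫ g = 0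
    · refine ⟨Injective.factorThru (cokernel.desc i g h0) j, ?_⟩
      rw [Category.assoc, Injective.comp_factorThru, cokernel.π_desc]
    · haveI : Mono (i ≫ g) := mono_of_nonzero_from_simple h0
      haveI : Mono g := hess g ‹_›
      exact absurd (IsSplitMono.mk' ⟨Injective.factorThru (𝟙 E) g,
        Injective.comp_factorThru _ _⟩) hg

end Paper
end

section
/- Let G be a Grothendieck abelian category, let g : E → Ẽ be a left almost split morphism in G with E an injective object, and let e : Ẽ → E(Ẽ) be the injective envelope of Ẽ. Then f := e ∘ g is a left almost split morphism in the full subcategory Inj(G) of injective objects of G. -/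
open CategoryTheory Limits

universe u v

namespace Paper

variable {G : Type u} [Category.{v} G] [Abelian G] [HasFilteredColimits G] [AB5 G]
  [HasSeparator G]

theorem las_inj_of_las {E Et : G} (hE : Injective E) (g : E ⟶ Et)
    (hg : LeftAlmostSplitIn (fun _ : G => True) g) {E' : G} (e : Et ⟶ E')
    (he : IsInjectiveEnvelope e) :
    LeftAlmostSplitIn (fun X : G => Injective X) (g ≫ e) := by
  obtain ⟨hns, hfac⟩ := hg
  obtain ⟨hE', hmono, _⟩ := he
  constructor
  · intro hsm
    exact hns ⟨⟨e ≫ retraction (g ≫ e), by simp [← Category.assoc]⟩⟩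
  · intro Z hZ g' hg'
    obtain ⟨h, hh⟩ := hfac trivial g' hg'
    obtain ⟨h', hh'⟩ := hZ.factors h e
    exact ⟨h', by rw [Category.assoc, hh', hh]⟩

end Paper
end

section
/- Let (T, F) be a torsion pair in Mod-R. A nonzero right R-module T₀ is almost torsion-free if and only if for every R-module homomorphism g : Y → T₀ with Ker(g) ∈ F, either Y ∈ F or g is a split epimorphism. -/
open CategoryTheory Limits

universe u

namespace Paper

variable {R : Type u} [Ring R]

/-- A torsion pair `(T, F)` in the category of `R`-modules: Hom(T, F) = 0 and every
module fits in a short exact sequence with torsion kernel and torsion-free cokernel. -/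
structure TorsionPair (R : Type u) [Ring R] where
  tors : Set (ModuleCat.{u} R)
  free : Set (ModuleCat.{u} R)
  isoClosed_tors : ∀ {X Y : ModuleCat.{u} R}, (X ≅ Y) → X ∈ tors → Y ∈ tors
  isoClosed_free : ∀ {X Y : ModuleCat.{u} R}, (X ≅ Y) → X ∈ free → Y ∈ free
  hom_vanish : ∀ {T F : ModuleCat.{u} R}, T ∈ tors → F ∈ free → ∀ f : T ⟶ F, f = 0
  exists_ses : ∀ X : ModuleCat.{u} R, ∃ (A B : ModuleCat.{u} R) (i : A ⟶ X) (p : X ⟶ B)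
    (w : i ≫ p = 0), A ∈ tors ∧ B ∈ free ∧ (ShortComplex.mk i p w).ShortExact

/-- A nonzero module is almost torsion-free if every proper submodule is torsion-free
(ATF1) and every short exact sequence `0 → A → B → T₀ → 0` with `B` torsion has `A`
torsion (ATF2). -/
def AlmostTorsionFree (tors free : Set (ModuleCat.{u} R)) (T₀ : ModuleCat.{u} R) : Prop :=
  Nontrivial T₀ ∧
  (∀ N : Submodule R T₀, N ≠ ⊤ → ModuleCat.of R N ∈ free) ∧
  (∀ (A B : ModuleCat.{u} R) (i : A ⟶ B) (p : B ⟶ T₀) (w : i ≫ p = 0),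
    (ShortComplex.mk i p w).ShortExact → B ∈ tors → A ∈ tors)

/-- A nonzero module is almost torsion if every proper quotient is torsion (AT1) and
every short exact sequence `0 → F₀ → A → B → 0` with `A` torsion-free has `B`
torsion-free (AT2). -/
def AlmostTorsion (tors free : Set (ModuleCat.{u} R)) (F₀ : ModuleCat.{u} R) : Prop :=
  Nontrivial F₀ ∧
  (∀ N : Submodule R F₀, N ≠ ⊥ → ModuleCat.of R (F₀ ⧸ N) ∈ tors) ∧
  (∀ (A B : ModuleCat.{u} R) (i : F₀ ⟶ A) (p : A ⟶ B) (w : i ≫ p = 0),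
    (ShortComplex.mk i p w).ShortExact → A ∈ free → B ∈ free)

/-! ### Auxiliary lemmas -/

/-- Any two subsingleton modules are linearly equivalent. -/
noncomputable def subsingletonLEquiv (M N : Type u) [AddCommGroup M] [Module R M]
    [AddCommGroup N] [Module R N] [Subsingleton M] [Subsingleton N] : M ≃ₗ[R] N where
  toFun := fun _ => 0
  map_add' := fun _ _ => (Subsingleton.elim _ _)
  map_smul' := fun _ _ => (Subsingleton.elim _ _)
  invFun := fun _ => 0
  left_inv := fun _ => Subsingleton.elim _ _
  right_inv := fun _ => Subsingleton.elim _ _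

lemma TorsionPair.mem_free_of_subsingleton (τ : TorsionPair R) (X : ModuleCat.{u} R)
    [hX : Subsingleton X] : X ∈ τ.free := by
  obtain ⟨A, B, i, p, w, hA, hB, hS⟩ := τ.exists_ses X
  have hsurj : Function.Surjective p := hS.moduleCat_surjective_g
  haveI : Subsingleton B := hsurj.subsingleton
  exact τ.isoClosed_free (subsingletonLEquiv (R := R) B X).toModuleIso hB

lemma TorsionPair.mem_tors_of_subsingleton (τ : TorsionPair R) (X : ModuleCat.{u} R)
    [hX : Subsingleton X] : X ∈ τ.tors := by
  obtain ⟨A, B, i, p, w, hA, hB, hS⟩ := τ.exists_ses X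
  have hinj : Function.Injective i := hS.moduleCat_injective_f
  haveI : Subsingleton A := ⟨fun a b => hinj (Subsingleton.elim _ _)⟩
  exact τ.isoClosed_tors (subsingletonLEquiv (R := R) A X).toModuleIso hA

lemma TorsionPair.subsingleton_of_tors_inj (τ : TorsionPair R) {A F : ModuleCat.{u} R}
    (hA : A ∈ τ.tors) (hF : F ∈ τ.free) (f : A ⟶ F) (hf : Function.Injective f) :
    Subsingleton A := by
  have h0 := τ.hom_vanish hA hF f
  refine ⟨fun a b => hf ?_⟩
  rw [h0]; rfl

lemma TorsionPair.subsingleton_of_surj_free (τ : TorsionPair R) {B F : ModuleCat.{u} R}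
    (hB : B ∈ τ.tors) (hF : F ∈ τ.free) (f : B ⟶ F) (hf : Function.Surjective f) :
    Subsingleton F := by
  have h0 := τ.hom_vanish hB hF f
  refine ⟨fun a b => ?_⟩
  obtain ⟨a', rfl⟩ := hf a
  obtain ⟨b', rfl⟩ := hf b
  rw [h0]; rfl

/-- The torsion class is closed under quotients (epimorphic images). -/
lemma TorsionPair.tors_of_surjective (τ : TorsionPair R) {X Q : ModuleCat.{u} R}
    (hX : X ∈ τ.tors) (f : X ⟶ Q) (hf : Function.Surjective f) : Q ∈ τ.tors := by
  obtain ⟨A, B, i, p, w, hA, hB, hS⟩ := τ.exists_ses Q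
  have hpf : Function.Surjective (f ≫ p) := hS.moduleCat_surjective_g.comp hf
  haveI hsB : Subsingleton B := τ.subsingleton_of_surj_free hX hB (f ≫ p) hpf
  have hiinj : Function.Injective i := hS.moduleCat_injective_f
  have hrange : LinearMap.range i.hom = LinearMap.ker p.hom :=
    hS.exact.moduleCat_range_eq_ker
  have hisurj : Function.Surjective i := by
    intro q
    have hq : q ∈ LinearMap.ker p.hom := by
      simp only [LinearMap.mem_ker]
      exact Subsingleton.elim _ _
    rw [← hrange] at hq
    exact hq
  exact τ.isoClosed_tors (LinearEquiv.ofBijective i.hom ⟨hiinj, hisurj⟩).toModuleIso hA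

theorem almostTorsionFree_iff (τ : TorsionPair R) (T₀ : ModuleCat.{u} R)
    (hT₀ : Nontrivial T₀) :
    AlmostTorsionFree τ.tors τ.free T₀ ↔
      ∀ (Y : ModuleCat.{u} R) (g : Y ⟶ T₀),
        ModuleCat.of R (LinearMap.ker g.hom) ∈ τ.free → (Y ∈ τ.free ∨ IsSplitEpi g) := by
  constructor
  · rintro ⟨hnt, h1, h2⟩ Y g hker
    obtain ⟨A, B, i, p, w, hA, hB, hS⟩ := τ.exists_ses Y
    set c : A ⟶ T₀ := i ≫ g with hc
    by_cases htop : LinearMap.range c.hom = ⊤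
    · -- `c` is surjective; build the short exact sequence `0 → ker c → A → T₀ → 0`
      set ι : ModuleCat.of R (LinearMap.ker c.hom) ⟶ A :=
        ModuleCat.ofHom (LinearMap.ker c.hom).subtype with hι
      have w2 : ι ≫ c = 0 := by
        apply ModuleCat.hom_ext
        apply LinearMap.ext
        rintro ⟨x, hx⟩
        exact hx
      have hS2 : (ShortComplex.mk ι c w2).ShortExact := by
        have hexact : (ShortComplex.mk ι c w2).Exact := by
          rw [ShortComplex.moduleCat_exact_iff_range_eq_ker]
          exact Submodule.range_subtype _
        haveI : Mono ι := (ModuleCat.mono_iff_injective ι).mpr (Submodule.injective_subtype _)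
        haveI : Epi c := (ModuleCat.epi_iff_surjective c).mpr
          (LinearMap.range_eq_top.mp htop)
        exact ⟨hexact⟩
      have hKtors : ModuleCat.of R (LinearMap.ker c.hom) ∈ τ.tors :=
        h2 _ A ι c w2 hS2 hA
      -- `ker c` embeds into `ker g`, which is torsion-free, so `ker c` is trivial
      have hgi : ∀ x : LinearMap.ker c.hom, i x.1 ∈ LinearMap.ker g.hom := fun x => x.2
      set φ : ModuleCat.of R (LinearMap.ker c.hom) ⟶ ModuleCat.of R (LinearMap.ker g.hom) :=
        ModuleCat.ofHom (LinearMap.codRestrict (LinearMap.ker g.hom)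
          ((i.hom).comp (LinearMap.ker c.hom).subtype) hgi) with hφ
      have hφinj : Function.Injective φ := by
        intro a b hab
        have : i a.1 = i b.1 := congrArg Subtype.val hab
        exact Subtype.ext (hS.moduleCat_injective_f this)
      haveI hKsub : Subsingleton (LinearMap.ker c.hom) :=
        τ.subsingleton_of_tors_inj hKtors hker φ hφinj
      have hcinj : Function.Injective c.hom := by
        rw [← LinearMap.ker_eq_bot]
        ext a
        simp only [Submodule.mem_bot]
        constructor
        · intro ha
          exact congrArg Subtype.val
            (Subsingleton.elim (⟨a, ha⟩ : LinearMap.ker c.hom) ⟨0, by simp⟩)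
        · rintro rfl; simp
      set e : A ≃ₗ[R] T₀ :=
        LinearEquiv.ofBijective c.hom ⟨hcinj, LinearMap.range_eq_top.mp htop⟩ with he
      refine Or.inr (IsSplitEpi.mk' ⟨ModuleCat.ofHom (e.symm : T₀ →ₗ[R] A) ≫ i, ?_⟩)
      apply ModuleCat.hom_ext
      apply LinearMap.ext
      intro t
      exact e.apply_symm_apply t
    · -- the image of `c` is a proper submodule, hence torsion-free, hence `c = 0`
      have hfree : ModuleCat.of R (LinearMap.range c.hom) ∈ τ.free := h1 _ htop
      have hc0 : ∀ a, c a = 0 := by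
        have h0 := τ.hom_vanish hA hfree
          (ModuleCat.ofHom ((c.hom).rangeRestrict))
        intro a
        have : (c.hom).rangeRestrict a = 0 := ConcreteCategory.congr_hom h0 a
        exact congrArg Subtype.val this
      -- so `A` embeds into `ker g`, hence is trivial
      set φ : A ⟶ ModuleCat.of R (LinearMap.ker g.hom) :=
        ModuleCat.ofHom (LinearMap.codRestrict (LinearMap.ker g.hom) (i.hom)
          (fun a => hc0 a)) with hφ
      have hφinj : Function.Injective φ := by
        intro a b hab
        exact hS.moduleCat_injective_f (congrArg Subtype.val hab)
      haveI hAsub : Subsingleton A := τ.subsingleton_of_tors_inj hA hker φ hφinj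
      -- hence `p : Y → B` is an isomorphism and `Y` is torsion-free
      have hpinj : Function.Injective p.hom := by
        rw [← LinearMap.ker_eq_bot]
        rw [← hS.exact.moduleCat_range_eq_ker]
        apply le_bot_iff.mp
        rintro _ ⟨a, rfl⟩
        have : a = 0 := Subsingleton.elim _ _
        simp [this]
      have hpsurj : Function.Surjective p := hS.moduleCat_surjective_g
      exact Or.inl (τ.isoClosed_free
        (LinearEquiv.ofBijective p.hom ⟨hpinj, hpsurj⟩).toModuleIso.symm hB)
  · intro h
    refine ⟨hT₀, ?_, ?_⟩
    · -- ATF1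
      intro N hN
      set g : ModuleCat.of R N ⟶ T₀ := ModuleCat.ofHom N.subtype with hg
      have hsub : Subsingleton (LinearMap.ker g.hom) := by
        refine ⟨fun a b => Subtype.ext ?_⟩
        have ha : N.subtype a.1 = 0 := a.2
        have hb : N.subtype b.1 = 0 := b.2
        exact Subtype.ext (ha.trans hb.symm)
      have hker : ModuleCat.of R (LinearMap.ker g.hom) ∈ τ.free :=
        τ.mem_free_of_subsingleton (ModuleCat.of R (LinearMap.ker g.hom)) (hX := hsub)
      rcases h _ g hker with hY | hsplit
      · exact hY
      · exfalso
        apply hN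
        have hsurj : Function.Surjective g := by
          intro t
          refine ⟨section_ g t, ?_⟩
          exact ConcreteCategory.congr_hom (IsSplitEpi.id g) t
        rw [← Submodule.range_subtype N]
        exact LinearMap.range_eq_top.mpr hsurj
    · -- ATF2
      intro A B i p w hS hB
      obtain ⟨C, D, j, q, w2, hC, hD, hS2⟩ := τ.exists_ses A
      set N : Submodule R B := LinearMap.range (j ≫ i).hom with hN
      have hNle : N ≤ LinearMap.ker p.hom := by
        rintro _ ⟨c, rfl⟩
        exact ConcreteCategory.congr_hom w (j c)
      set Y := ModuleCat.of R (B ⧸ N) with hY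
      set gmap : B ⧸ N →ₗ[R] T₀ := N.liftQ (p.hom) hNle with hgmap
      set g : Y ⟶ T₀ := ModuleCat.ofHom gmap with hg
      -- `ker g ≅ D`
      have hψmem : ∀ a : A, N.mkQ (i a) ∈ LinearMap.ker gmap := by
        intro a
        have : gmap (N.mkQ (i a)) = p (i a) := rfl
        simp only [LinearMap.mem_ker, this]
        exact ConcreteCategory.congr_hom w a
      set ψ : A →ₗ[R] LinearMap.ker gmap :=
        LinearMap.codRestrict (LinearMap.ker gmap)
          ((N.mkQ).comp (i.hom)) hψmem with hψ
      have hψsurj : Function.Surjective ψ := by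
        rintro ⟨y, hy⟩
        obtain ⟨b, rfl⟩ := N.mkQ_surjective y
        have hb : b ∈ LinearMap.ker p.hom := hy
        rw [← hS.exact.moduleCat_range_eq_ker] at hb
        obtain ⟨a, rfl⟩ := hb
        exact ⟨a, rfl⟩
      have hψker : LinearMap.ker ψ = LinearMap.ker q.hom := by
        ext a
        simp only [LinearMap.mem_ker]
        constructor
        · intro ha
          have : N.mkQ (i a) = 0 := congrArg Subtype.val ha
          have hmem : i a ∈ N := (Submodule.Quotient.mk_eq_zero N).mp this
          obtain ⟨c, hcc⟩ := hmem
          have : j c = a := hS.moduleCat_injective_f hcc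
          rw [← this]
          exact ConcreteCategory.congr_hom w2 c
        · intro ha
          have hmem : a ∈ LinearMap.ker q.hom := ha
          rw [← hS2.exact.moduleCat_range_eq_ker] at hmem
          obtain ⟨c, rfl⟩ := hmem
          apply Subtype.ext
          show N.mkQ (i (j c)) = 0
          exact (Submodule.Quotient.mk_eq_zero N).mpr ⟨c, rfl⟩
      have hqsurj : Function.Surjective q := hS2.moduleCat_surjective_g
      -- build the equivalence `D ≃ₗ ker gmap`
      set eD : (A ⧸ LinearMap.ker (q.hom)) ≃ₗ[R] D :=
        (q.hom).quotKerEquivOfSurjective hqsurj with heD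
      set eψ : (A ⧸ LinearMap.ker ψ) ≃ₗ[R] LinearMap.ker gmap :=
        ψ.quotKerEquivOfSurjective hψsurj with heψ
      set e : D ≃ₗ[R] LinearMap.ker gmap :=
        (eD.symm.trans (Submodule.quotEquivOfEq _ _ hψker.symm)).trans eψ with he
      have hkerfree : ModuleCat.of R (LinearMap.ker g.hom) ∈ τ.free :=
        τ.isoClosed_free e.toModuleIso hD
      -- `Y` is torsion as a quotient of `B`
      have hYtors : Y ∈ τ.tors :=
        τ.tors_of_surjective hB (ModuleCat.ofHom N.mkQ) N.mkQ_surjective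
      rcases h Y g hkerfree with hYfree | hsplit
      · exfalso
        haveI hYsub : Subsingleton Y := by
          have h0 := τ.hom_vanish hYtors hYfree (𝟙 Y)
          refine ⟨fun a b => ?_⟩
          have ha : a = (𝟙 Y) a := rfl
          have hb : b = (𝟙 Y) b := rfl
          rw [ha, hb, h0]
          rfl
        have hgsurj : Function.Surjective g := by
          intro t
          obtain ⟨b, hb⟩ := hS.moduleCat_surjective_g t
          exact ⟨N.mkQ b, hb⟩
        haveI : Subsingleton T₀ := hgsurj.subsingleton
        exact false_of_nontrivial_of_subsingleton T₀
      · -- `ker g` is a direct summand of the torsion module `Y`, hence torsion and trivial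
        obtain ⟨sec⟩ := hsplit.exists_splitEpi
        let sfun : (T₀ : Type u) →ₗ[R] (B ⧸ N) := sec.section_.hom
        have hsg : ∀ t, gmap (sfun t) = t := fun t => ConcreteCategory.congr_hom sec.id t
        have hπmem : ∀ y : B ⧸ N, y - sfun (gmap y) ∈ LinearMap.ker gmap := by
          intro y
          show gmap (y - sfun (gmap y)) = 0
          rw [map_sub, hsg]
          exact sub_self _
        set π : (B ⧸ N) →ₗ[R] LinearMap.ker gmap :=
          { toFun := fun y => ⟨y - sfun (gmap y), hπmem y⟩
            map_add' := fun x y => Subtype.ext (by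
              show (x + y) - sfun (gmap (x + y)) = (x - sfun (gmap x)) + (y - sfun (gmap y))
              rw [map_add, map_add]
              abel)
            map_smul' := fun r x => Subtype.ext (by
              show (r • x) - sfun (gmap (r • x)) = r • (x - sfun (gmap x))
              rw [map_smul, map_smul, smul_sub]) } with hπ
        have hπsurj : Function.Surjective π := by
          rintro ⟨k, hk⟩
          refine ⟨k, Subtype.ext ?_⟩
          have hgk : gmap k = 0 := hk
          show k - sfun (gmap k) = k
          rw [hgk, map_zero, sub_zero]
        have hKtors : ModuleCat.of R (LinearMap.ker gmap) ∈ τ.tors :=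
          τ.tors_of_surjective hYtors (ModuleCat.ofHom π) hπsurj
        haveI hKsub : Subsingleton (LinearMap.ker gmap) := by
          have h0 := τ.hom_vanish hKtors hkerfree (𝟙 (ModuleCat.of R (LinearMap.ker gmap)))
          refine ⟨fun a b => ?_⟩
          have ha : a = (𝟙 (ModuleCat.of R (LinearMap.ker gmap))) a := rfl
          have hb : b = (𝟙 (ModuleCat.of R (LinearMap.ker gmap))) b := rfl
          rw [ha, hb, h0]
          rfl
        haveI hDsub : Subsingleton D := e.symm.surjective.subsingleton
        -- hence `q = 0`, so `j` is surjective and `A ≅ C` is torsion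
        have hjsurj : Function.Surjective j := by
          intro a
          have hq0 : q a = 0 := Subsingleton.elim _ _
          have hmem : a ∈ LinearMap.ker q.hom := hq0
          rw [← hS2.exact.moduleCat_range_eq_ker] at hmem
          exact hmem
        exact τ.isoClosed_tors
          (LinearEquiv.ofBijective j.hom ⟨hS2.moduleCat_injective_f, hjsurj⟩).toModuleIso hC

end Paper
end

section
/- Let (T, F) be a torsion pair in Mod-R. (1) If T₀ and T₀' are both torsion, almost torsion-free modules, then every nonzero homomorphism g : T₀ → T₀' is an isomorphism. (2) If F₀ and F₀' are both torsion-free, almost torsion modules, then every nonzero homomorphism f : F₀ → F₀' is an isomorphism. In particular, every torsion almost torsion-free module and every torsion-free almost torsion module is a brick, i.e., its endomorphism ring is a division ring. -/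
/-!
A nonzero map `g` between torsion, almost torsion-free modules is onto, since otherwise its
image would be a proper, hence torsion-free, submodule receiving a nonzero map from a torsion
module. Its kernel is then torsion by (ATF2) for the target, and torsion-free by (ATF1) for the
source, as it is proper; so it vanishes. The almost torsion case is dual: the coimage is a
torsion quotient inside a torsion-free module, and the cokernel is torsion by (AT1) and
torsion-free by (AT2).
-/

open CategoryTheory Limits

universe u

namespace Paper

variable {R : Type u} [Ring R]

namespace TorsionPair

variable (τ : TorsionPair R)

lemma subsingleton_of_mem_tors_of_mem_free {X : ModuleCat.{u} R} (hT : X ∈ τ.tors)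
    (hF : X ∈ τ.free) : Subsingleton X where
  allEq a b := by
    have hid := τ.hom_vanish hT hF (𝟙 X)
    rw [← ModuleCat.id_apply (M := X) a, ← ModuleCat.id_apply (M := X) b, hid]
    rfl

lemma surjective_of_mem_tors_of_forall_ne_top {X Y : ModuleCat.{u} R} (hX : X ∈ τ.tors)
    (hY : ∀ N : Submodule R Y, N ≠ ⊤ → ModuleCat.of R N ∈ τ.free) {g : X ⟶ Y} (hg : g ≠ 0) :
    Function.Surjective g := by
  by_contra hns
  have hrange : LinearMap.range g.hom ≠ ⊤ := fun h => hns (LinearMap.range_eq_top.1 h)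
  have hzero := τ.hom_vanish hX (hY _ hrange) (ModuleCat.ofHom g.hom.rangeRestrict)
  refine hg (ModuleCat.hom_ext (LinearMap.ext fun x => ?_))
  exact congrArg Subtype.val (congrArg (fun φ => φ.hom x) hzero)

lemma injective_of_forall_ne_bot_of_mem_free {X Y : ModuleCat.{u} R}
    (hX : ∀ N : Submodule R X, N ≠ ⊥ → ModuleCat.of R (X ⧸ N) ∈ τ.tors) (hY : Y ∈ τ.free)
    {f : X ⟶ Y} (hf : f ≠ 0) : Function.Injective f := by
  by_contra hni
  rw [← LinearMap.ker_eq_bot (f := f.hom)] at hni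
  have hzero := τ.hom_vanish (hX _ hni) hY (ModuleCat.ofHom (f.hom.ker.liftQ f.hom le_rfl))
  refine hf (ModuleCat.hom_ext (LinearMap.ext fun x => ?_))
  exact congrArg (fun φ => φ.hom (f.hom.ker.mkQ x)) hzero

end TorsionPair

lemma AlmostTorsionFree.injective_of_surjective (τ : TorsionPair R) {T₀ T₀' : ModuleCat.{u} R}
    (hT : T₀ ∈ τ.tors) (h : AlmostTorsionFree τ.tors τ.free T₀)
    (h' : AlmostTorsionFree τ.tors τ.free T₀') {g : T₀ ⟶ T₀'} (hg : g ≠ 0)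
    (hsurj : Function.Surjective g) : Function.Injective g := by
  have hker : LinearMap.ker g.hom ≠ ⊤ := fun htop =>
    hg (ModuleCat.hom_ext (LinearMap.ker_eq_top.1 htop))
  have hkerTors := h'.2.2 _ _ _ _ _ (LinearMap.shortExact_shortComplexKer hsurj) hT
  have := τ.subsingleton_of_mem_tors_of_mem_free hkerTors (h.2.1 _ hker)
  rw [← LinearMap.ker_eq_bot (f := g.hom)]
  exact Submodule.eq_bot_of_subsingleton

theorem AlmostTorsionFree.isIso_of_ne_zero (τ : TorsionPair R) {T₀ T₀' : ModuleCat.{u} R}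
    (hT : T₀ ∈ τ.tors) (h : AlmostTorsionFree τ.tors τ.free T₀)
    (h' : AlmostTorsionFree τ.tors τ.free T₀') {g : T₀ ⟶ T₀'} (hg : g ≠ 0) : IsIso g := by
  have hsurj := τ.surjective_of_mem_tors_of_forall_ne_top hT h'.2.1 hg
  rw [ConcreteCategory.isIso_iff_bijective]
  exact ⟨AlmostTorsionFree.injective_of_surjective τ hT h h' hg hsurj, hsurj⟩

lemma AlmostTorsion.surjective_of_injective (τ : TorsionPair R) {F₀ F₀' : ModuleCat.{u} R}
    (hF' : F₀' ∈ τ.free) (h : AlmostTorsion τ.tors τ.free F₀)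
    (h' : AlmostTorsion τ.tors τ.free F₀') {f : F₀ ⟶ F₀'} (hf : f ≠ 0)
    (hinj : Function.Injective f) : Function.Surjective f := by
  have hrange : LinearMap.range f.hom ≠ ⊥ := fun hbot =>
    hf (ModuleCat.hom_ext (LinearMap.range_eq_bot.1 hbot))
  have hexact := f.hom.exact_map_mkQ_range
  have hcokerFree := h.2.2 _ _ _ _ _
    (ModuleCat.shortComplex_shortExact
      (ModuleCat.shortComplexOfCompEqZero _ _ hexact.linearMap_comp_eq_zero)
      hexact hinj (Submodule.mkQ_surjective _)) hF'
  have := τ.subsingleton_of_mem_tors_of_mem_free (h'.2.1 _ hrange) hcokerFree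
  rw [← LinearMap.range_eq_top (f := f.hom), ← Submodule.Quotient.subsingleton_iff]
  assumption

theorem AlmostTorsion.isIso_of_ne_zero (τ : TorsionPair R) {F₀ F₀' : ModuleCat.{u} R}
    (hF' : F₀' ∈ τ.free) (h : AlmostTorsion τ.tors τ.free F₀)
    (h' : AlmostTorsion τ.tors τ.free F₀') {f : F₀ ⟶ F₀'} (hf : f ≠ 0) : IsIso f := by
  have hinj := τ.injective_of_forall_ne_bot_of_mem_free h.2.1 hF' hf
  rw [ConcreteCategory.isIso_iff_bijective]
  exact ⟨hinj, AlmostTorsion.surjective_of_injective τ hF' h h' hf hinj⟩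

theorem almost_torsion_modules_are_bricks (τ : TorsionPair R) :
    (∀ (T₀ T₀' : ModuleCat.{u} R), T₀ ∈ τ.tors → AlmostTorsionFree τ.tors τ.free T₀ →
      T₀' ∈ τ.tors → AlmostTorsionFree τ.tors τ.free T₀' →
      ∀ g : T₀ ⟶ T₀', g ≠ 0 → IsIso g) ∧
    (∀ (F₀ F₀' : ModuleCat.{u} R), F₀ ∈ τ.free → AlmostTorsion τ.tors τ.free F₀ →
      F₀' ∈ τ.free → AlmostTorsion τ.tors τ.free F₀' →
      ∀ f : F₀ ⟶ F₀', f ≠ 0 → IsIso f) ∧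
    (∀ T₀ : ModuleCat.{u} R, T₀ ∈ τ.tors → AlmostTorsionFree τ.tors τ.free T₀ →
      ∀ f : T₀ ⟶ T₀, f ≠ 0 → IsIso f) ∧
    (∀ F₀ : ModuleCat.{u} R, F₀ ∈ τ.free → AlmostTorsion τ.tors τ.free F₀ →
      ∀ f : F₀ ⟶ F₀, f ≠ 0 → IsIso f) :=
  ⟨fun _ _ hT h _ h' _ hg => AlmostTorsionFree.isIso_of_ne_zero τ hT h h' hg,
    fun _ _ _ h hF' h' _ hf => AlmostTorsion.isIso_of_ne_zero τ hF' h h' hf,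
    fun _ hT h _ hf => AlmostTorsionFree.isIso_of_ne_zero τ hT h h hf,
    fun _ hF h _ hf => AlmostTorsion.isIso_of_ne_zero τ hF h h hf⟩

end Paper
end
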